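/- arXiv:2403.17415 — 4 statements merged into one kernel-verified Lean document; each statement's English description precedes it below -/
import Mathlib

section
/- Let n ≥ 1 and let U ⊆ ℝ^{n+1} be an open bounded convex set. There exist μ₀ = μ₀(n, U) ∈ (0,1) and C = C(n, U) > 0 such that for every C¹ metric g on U that is μ-flat with μ ∈ (0, μ₀), every X ∈ U at which g(X) = δ (the matrix (gᵢⱼ(X)) equals the identity), and every ρ > 0: B_{(1−Cμρ)ρ}(X) ∩ U ⊆ B^g_ρ(X) ⊆ B_{(1+Cμρ)ρ}(X). -/
open MeasureTheory Set

attribute [local instance] Matrix.frobeniusNormedAddCommGroup Matrix.frobeniusNormedSpace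

noncomputable section

/-- Frobenius norm of a real square matrix. -/
def frobNorm {m : ℕ} (M : Matrix (Fin m) (Fin m) ℝ) : ℝ :=
  Real.sqrt (∑ i, ∑ j, (M i j) ^ 2)

/-- The quadratic form `v ↦ Σᵢⱼ Aᵢⱼ vᵢ vⱼ` associated to a matrix. -/
def quadForm {m : ℕ} (A : Matrix (Fin m) (Fin m) ℝ) (v : EuclideanSpace ℝ (Fin m)) : ℝ :=
  ∑ i, ∑ j, A i j * v i * v j

/-- Euclidean norm `|Dg(X)| = √(Σᵢⱼₖ (∂gᵢⱼ/∂xₖ(X))²)` of the derivative of a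
matrix-valued map at a point (derivative taken within `U`). -/
def derivMetricNorm {m : ℕ} (g : EuclideanSpace ℝ (Fin m) → Matrix (Fin m) (Fin m) ℝ)
    (U : Set (EuclideanSpace ℝ (Fin m))) (X : EuclideanSpace ℝ (Fin m)) : ℝ :=
  Real.sqrt (∑ k, ∑ i, ∑ j, (fderivWithin ℝ g U X (EuclideanSpace.single k 1) i j) ^ 2)

/-- `g` is a `C¹` Riemannian metric on `U`: it is `C¹` and each `g X` is a
symmetric positive-definite matrix. -/
def IsC1Metric {m : ℕ} (g : EuclideanSpace ℝ (Fin m) → Matrix (Fin m) (Fin m) ℝ)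
    (U : Set (EuclideanSpace ℝ (Fin m))) : Prop :=
  ContDiffOn ℝ 1 g U ∧ ∀ X ∈ U, (g X).IsSymm ∧ (g X).PosDef

/-- `g` is `μ`-flat on `U`: `|g(X) − δ| ≤ μ` and `|Dg(X)| ≤ μ` for all `X ∈ U`. -/
def MuFlat {m : ℕ} (g : EuclideanSpace ℝ (Fin m) → Matrix (Fin m) (Fin m) ℝ)
    (U : Set (EuclideanSpace ℝ (Fin m))) (μ : ℝ) : Prop :=
  ∀ X ∈ U, frobNorm (g X - 1) ≤ μ ∧ derivMetricNorm g U X ≤ μ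

/-- Length of the curve `γ : [0,1] → ℝ^m` under the metric `g`. -/
def lengthG {m : ℕ} (g : EuclideanSpace ℝ (Fin m) → Matrix (Fin m) (Fin m) ℝ)
    (γ : ℝ → EuclideanSpace ℝ (Fin m)) : ℝ :=
  ∫ t in Set.Icc (0:ℝ) 1, Real.sqrt (quadForm (g (γ t)) (derivWithin γ (Set.Icc 0 1) t))

/-- Euclidean length of the curve `γ : [0,1] → ℝ^m`. -/
def lengthE {m : ℕ} (γ : ℝ → EuclideanSpace ℝ (Fin m)) : ℝ :=
  ∫ t in Set.Icc (0:ℝ) 1, ‖derivWithin γ (Set.Icc 0 1) t‖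


/-- Geodesic distance in `U` under the metric `g`: infimum of the `g`-length of
`C¹` curves in `U` joining `X` and `Y`. -/
def geodDist {m : ℕ} (g : EuclideanSpace ℝ (Fin m) → Matrix (Fin m) (Fin m) ℝ)
    (U : Set (EuclideanSpace ℝ (Fin m))) (X Y : EuclideanSpace ℝ (Fin m)) : ℝ :=
  sInf {L : ℝ | ∃ γ : ℝ → EuclideanSpace ℝ (Fin m),
    ContDiffOn ℝ 1 γ (Set.Icc 0 1) ∧ (∀ t ∈ Set.Icc (0:ℝ) 1, γ t ∈ U) ∧
    γ 0 = X ∧ γ 1 = Y ∧ L = lengthG g γ}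

/-- Geodesic ball `B^g_ρ(X) = {Y ∈ U : dist_g(X,Y) < ρ}`. -/
def geodBall {m : ℕ} (g : EuclideanSpace ℝ (Fin m) → Matrix (Fin m) (Fin m) ℝ)
    (U : Set (EuclideanSpace ℝ (Fin m))) (X : EuclideanSpace ℝ (Fin m)) (ρ : ℝ) :
    Set (EuclideanSpace ℝ (Fin m)) :=
  {Y ∈ U | geodDist g U X Y < ρ}

/-!
Since `g(X) = δ` and `|Dg| ≤ μ` on the convex set `U`, the mean value inequality gives
`|g(Z) - δ| ≤ μ |Z - X|`, and `(1 - b) |v|² ≤ g_Z(v, v) ≤ (1 + b) |v|²` whenever `|g(Z) - δ| ≤ b`.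
The segment from `X` to `Y` therefore has `g`-length at most `√(1 + μ|Y - X|) |Y - X|`, which gives
the inner inclusion. Conversely, by the coarse bound `|g - δ| ≤ μ ≤ 1/2` a curve of `g`-length
`< ρ` has Euclidean length `< 2ρ`, so it stays in `B_{2ρ}(X)` where `|g - δ| ≤ 2μρ`; hence
`|Y - X| < ρ / √(1 - 2μρ) ≤ (1 + 8μρ) ρ` if `μρ ≤ 1/8`, and `|Y - X| < 2ρ < (1 + 8μρ) ρ` otherwise.
-/

open AffineMap

theorem norm_apply_le_sqrt_sum_norm_sq_single_mul {ι F : Type*} [Fintype ι] [DecidableEq ι]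
    [SeminormedAddCommGroup F] [NormedSpace ℝ F] (L : EuclideanSpace ℝ ι →ₗ[ℝ] F)
    (v : EuclideanSpace ℝ ι) :
    ‖L v‖ ≤ √(∑ k, ‖L (EuclideanSpace.single k 1)‖ ^ 2) * ‖v‖ := by
  conv_lhs => rw [← (EuclideanSpace.basisFun ι ℝ).sum_repr v]
  simp only [EuclideanSpace.basisFun_apply, EuclideanSpace.basisFun_repr, map_sum, map_smul]
  calc ‖∑ k, v k • L (EuclideanSpace.single k 1)‖
      ≤ ∑ k, ‖L (EuclideanSpace.single k 1)‖ * ‖v k‖ := by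
        refine (norm_sum_le _ _).trans_eq (Finset.sum_congr rfl fun k _ => ?_)
        rw [norm_smul, mul_comm]
    _ ≤ √(∑ k, ‖L (EuclideanSpace.single k 1)‖ ^ 2) * √(∑ k, ‖v k‖ ^ 2) :=
        Real.sum_mul_le_sqrt_mul_sqrt _ _ _
    _ = _ := by rw [EuclideanSpace.norm_eq]

section Matrix

variable {m : ℕ}

theorem frobNorm_eq_norm (M : Matrix (Fin m) (Fin m) ℝ) : frobNorm M = ‖M‖ := by
  rw [Matrix.frobenius_norm_def, frobNorm, Real.sqrt_eq_rpow]
  simp only [Real.norm_eq_abs, Real.rpow_two, sq_abs]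

theorem frobenius_norm_sq_eq_sum_sq (M : Matrix (Fin m) (Fin m) ℝ) :
    ‖M‖ ^ 2 = ∑ i, ∑ j, M i j ^ 2 := by
  rw [← frobNorm_eq_norm, frobNorm, Real.sq_sqrt (by positivity)]

theorem quadForm_one (v : EuclideanSpace ℝ (Fin m)) : quadForm 1 v = ‖v‖ ^ 2 := by
  rw [EuclideanSpace.real_norm_sq_eq]
  simp [quadForm, Matrix.one_apply, sq]

theorem quadForm_sub (A B : Matrix (Fin m) (Fin m) ℝ) (v : EuclideanSpace ℝ (Fin m)) :
    quadForm (A - B) v = quadForm A v - quadForm B v := by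
  simp only [quadForm, Matrix.sub_apply, sub_mul, Finset.sum_sub_distrib]

theorem abs_quadForm_le (A : Matrix (Fin m) (Fin m) ℝ) (v : EuclideanSpace ℝ (Fin m)) :
    |quadForm A v| ≤ ‖A‖ * ‖v‖ ^ 2 := by
  have hA : ‖A‖ = √(∑ p : Fin m × Fin m, |A p.1 p.2| ^ 2) := by
    rw [← Real.sqrt_sq (norm_nonneg A), frobenius_norm_sq_eq_sum_sq, Fintype.sum_prod_type]
    simp only [sq_abs]
  have hv : ‖v‖ ^ 2 = √(∑ p : Fin m × Fin m, |v p.1 * v p.2| ^ 2) := by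
    rw [← Real.sqrt_sq (sq_nonneg ‖v‖), EuclideanSpace.real_norm_sq_eq, sq (∑ i, _),
      Finset.sum_mul_sum, Fintype.sum_prod_type]
    simp only [sq_abs, mul_pow]
  rw [hA, hv, quadForm, ← Fintype.sum_prod_type']
  calc |∑ p : Fin m × Fin m, A p.1 p.2 * v p.1 * v p.2|
      ≤ ∑ p : Fin m × Fin m, |A p.1 p.2| * |v p.1 * v p.2| := by
        refine (Finset.abs_sum_le_sum_abs _ _).trans_eq (Finset.sum_congr rfl fun p _ => ?_)
        rw [mul_assoc, abs_mul]
    _ ≤ _ := Real.sum_mul_le_sqrt_mul_sqrt _ _ _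

theorem abs_quadForm_sub_norm_sq_le (A : Matrix (Fin m) (Fin m) ℝ)
    (v : EuclideanSpace ℝ (Fin m)) : |quadForm A v - ‖v‖ ^ 2| ≤ ‖A - 1‖ * ‖v‖ ^ 2 := by
  have h := abs_quadForm_le (A - 1) v
  rwa [quadForm_sub, quadForm_one] at h

variable {A : Matrix (Fin m) (Fin m) ℝ} {b : ℝ}

theorem sqrt_one_sub_mul_norm_le_sqrt_quadForm (hA : ‖A - 1‖ ≤ b) (v : EuclideanSpace ℝ (Fin m)) :
    √(1 - b) * ‖v‖ ≤ √(quadForm A v) := by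
  have hq := abs_le.mp (abs_quadForm_sub_norm_sq_le A v)
  rw [← Real.sqrt_sq (norm_nonneg v), ← Real.sqrt_mul' _ (sq_nonneg _)]
  exact Real.sqrt_le_sqrt (by nlinarith [sq_nonneg ‖v‖])

theorem sqrt_quadForm_le_sqrt_one_add_mul_norm (hA : ‖A - 1‖ ≤ b) (v : EuclideanSpace ℝ (Fin m)) :
    √(quadForm A v) ≤ √(1 + b) * ‖v‖ := by
  have hq := abs_le.mp (abs_quadForm_sub_norm_sq_le A v)
  rw [← Real.sqrt_sq (norm_nonneg v), ← Real.sqrt_mul' _ (sq_nonneg _)]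
  exact Real.sqrt_le_sqrt (by nlinarith [sq_nonneg ‖v‖])

end Matrix

section Metric

variable {m : ℕ} {g : EuclideanSpace ℝ (Fin m) → Matrix (Fin m) (Fin m) ℝ}
  {U : Set (EuclideanSpace ℝ (Fin m))} {γ : ℝ → EuclideanSpace ℝ (Fin m)}
  {X Y : EuclideanSpace ℝ (Fin m)} {μ ρ b : ℝ}

theorem norm_fderivWithin_apply_le_derivMetricNorm_mul (v : EuclideanSpace ℝ (Fin m)) :
    ‖fderivWithin ℝ g U X v‖ ≤ derivMetricNorm g U X * ‖v‖ := by
  refine (norm_apply_le_sqrt_sum_norm_sq_single_mul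
    (fderivWithin ℝ g U X).toLinearMap v).trans_eq ?_
  simp only [derivMetricNorm, ContinuousLinearMap.coe_coe, frobenius_norm_sq_eq_sum_sq]

theorem norm_sub_le_of_derivMetricNorm_le (hg : DifferentiableOn ℝ g U) (hU : Convex ℝ U)
    (hμ : ∀ Z ∈ U, derivMetricNorm g U Z ≤ μ) (hX : X ∈ U) (hY : Y ∈ U) :
    ‖g Y - g X‖ ≤ μ * ‖Y - X‖ := by
  have hseg : MapsTo (lineMap X Y) (Icc (0 : ℝ) 1) U := fun t ht => hU.lineMap_mem hX hY ht
  simpa only [lineMap_apply_one, lineMap_apply_zero] using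
    norm_image_sub_le_of_norm_deriv_le_segment_01' (f := fun t => g (lineMap X Y t))
      (fun t ht => (hg _ (hseg ht)).hasFDerivWithinAt.comp_hasDerivWithinAt t
        hasDerivWithinAt_lineMap hseg)
      (fun t ht => (norm_fderivWithin_apply_le_derivMetricNorm_mul _).trans
        (mul_le_mul_of_nonneg_right (hμ _ (hseg (Ico_subset_Icc_self ht))) (norm_nonneg _)))

theorem lengthE_nonneg : 0 ≤ lengthE γ :=
  integral_nonneg fun _ => norm_nonneg _

theorem lengthG_nonneg : 0 ≤ lengthG g γ :=
  integral_nonneg fun _ => Real.sqrt_nonneg _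

theorem norm_sub_le_lengthE (hγ : ContDiffOn ℝ 1 γ (Icc 0 1)) {s : ℝ} (hs : s ∈ Icc (0 : ℝ) 1) :
    ‖γ s - γ 0‖ ≤ lengthE γ := by
  set γ' := derivWithin γ (Icc 0 1)
  have hγ' : IntervalIntegrable γ' volume 0 1 :=
    (hγ.continuousOn_derivWithin (uniqueDiffOn_Icc zero_lt_one) le_rfl).intervalIntegrable_of_Icc
      zero_le_one
  have hsub : Icc 0 s ⊆ Icc (0 : ℝ) 1 := Icc_subset_Icc le_rfl hs.2
  have hftc : ∫ t in (0 : ℝ)..s, γ' t = γ s - γ 0 := by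
    refine intervalIntegral.integral_eq_sub_of_hasDeriv_right_of_le hs.1
      (hγ.continuousOn.mono hsub) (fun t ht => ?_)
      (hγ'.mono_set (by simpa [uIcc_of_le hs.1, uIcc_of_le zero_le_one] using hsub))
    have ht' : t ∈ Ioo (0 : ℝ) 1 := ⟨ht.1, ht.2.trans_le hs.2⟩
    exact ((hγ.differentiableOn one_ne_zero t (Ioo_subset_Icc_self ht')).hasDerivWithinAt.hasDerivAt
      (Icc_mem_nhds ht'.1 ht'.2)).hasDerivWithinAt
  calc ‖γ s - γ 0‖ ≤ ∫ t in (0 : ℝ)..s, ‖γ' t‖ := by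
        rw [← hftc]; exact intervalIntegral.norm_integral_le_integral_norm hs.1
    _ ≤ ∫ t in (0 : ℝ)..1, ‖γ' t‖ :=
        intervalIntegral.integral_mono_interval le_rfl hs.1 hs.2
          (.of_forall fun _ => norm_nonneg _) hγ'.norm
    _ = lengthE γ := by
        rw [intervalIntegral.integral_of_le zero_le_one, lengthE, integral_Icc_eq_integral_Ioc]

theorem sqrt_one_sub_mul_lengthE_le_lengthG (hg : ContinuousOn g U)
    (hγ : ContDiffOn ℝ 1 γ (Icc 0 1)) (hγU : ∀ t ∈ Icc (0 : ℝ) 1, γ t ∈ U)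
    (hb : ∀ t ∈ Icc (0 : ℝ) 1, ‖g (γ t) - 1‖ ≤ b) :
    √(1 - b) * lengthE γ ≤ lengthG g γ := by
  set γ' := derivWithin γ (Icc 0 1)
  have hγ' : ContinuousOn γ' (Icc 0 1) :=
    hγ.continuousOn_derivWithin (uniqueDiffOn_Icc zero_lt_one) le_rfl
  have hgγ : ContinuousOn (fun t => g (γ t)) (Icc 0 1) := hg.comp hγ.continuousOn hγU
  have hint : ContinuousOn (fun t => √(quadForm (g (γ t)) (γ' t))) (Icc 0 1) := by
    refine (continuousOn_finsetSum _ fun i _ => continuousOn_finsetSum _ fun j _ => ?_).sqrt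
    exact (((continuous_id.matrix_elem i j).comp_continuousOn hgγ).mul
      ((PiLp.continuous_apply 2 _ i).comp_continuousOn hγ')).mul
      ((PiLp.continuous_apply 2 _ j).comp_continuousOn hγ')
  rw [lengthE, ← integral_const_mul]
  exact setIntegral_mono_on (continuousOn_const.mul hγ'.norm).integrableOn_Icc
    hint.integrableOn_Icc measurableSet_Icc fun t ht =>
      sqrt_one_sub_mul_norm_le_sqrt_quadForm (hb t ht) (γ' t)

theorem lengthG_lineMap_le (hb : ∀ t ∈ Icc (0 : ℝ) 1, ‖g (lineMap X Y t) - 1‖ ≤ b) :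
    lengthG g (lineMap X Y) ≤ √(1 + b) * ‖Y - X‖ := by
  rw [lengthG]
  refine (Real.le_norm_self _).trans <| (norm_setIntegral_le_of_norm_le_const
    (C := √(1 + b) * ‖Y - X‖) measure_Icc_lt_top fun t ht => ?_).trans_eq (by simp)
  rw [Real.norm_of_nonneg (Real.sqrt_nonneg _),
    hasDerivWithinAt_lineMap.derivWithin (uniqueDiffOn_Icc zero_lt_one t ht)]
  exact sqrt_quadForm_le_sqrt_one_add_mul_norm (hb t ht) (Y - X)

theorem geodDist_le_lengthG (hγ : ContDiffOn ℝ 1 γ (Icc 0 1))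
    (hγU : ∀ t ∈ Icc (0 : ℝ) 1, γ t ∈ U) : geodDist g U (γ 0) (γ 1) ≤ lengthG g γ :=
  csInf_le ⟨0, by rintro _ ⟨γ, -, -, -, -, rfl⟩; exact lengthG_nonneg⟩ ⟨γ, hγ, hγU, rfl, rfl, rfl⟩

theorem exists_lengthG_lt_of_geodDist_lt (hU : Convex ℝ U) (hX : X ∈ U) (hY : Y ∈ U)
    (h : geodDist g U X Y < ρ) :
    ∃ γ : ℝ → EuclideanSpace ℝ (Fin m), ContDiffOn ℝ 1 γ (Icc 0 1) ∧
      (∀ t ∈ Icc (0 : ℝ) 1, γ t ∈ U) ∧ γ 0 = X ∧ γ 1 = Y ∧ lengthG g γ < ρ := by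
  obtain ⟨_, ⟨γ, hγ, hγU, h0, h1, rfl⟩, hlt⟩ := exists_lt_of_csInf_lt (by exact
    ⟨_, lineMap X Y, (contDiff_lineMap X Y).contDiffOn, fun t ht => hU.lineMap_mem hX hY ht,
      lineMap_apply_zero X Y, lineMap_apply_one X Y, rfl⟩) h
  exact ⟨γ, hγ, hγU, h0, h1, hlt⟩

theorem ball_inter_subset_geodBall (hU : Convex ℝ U) (hX : X ∈ U) (hμ : 0 ≤ μ)
    (hnear : ∀ Z ∈ U, ‖g Z - 1‖ ≤ μ * dist Z X) :
    Metric.ball X ((1 - μ * ρ) * ρ) ∩ U ⊆ geodBall g U X ρ := by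
  rintro Y ⟨hYX, hY⟩
  rw [Metric.mem_ball] at hYX
  have hρ : 0 < ρ := by nlinarith [dist_nonneg (x := Y) (y := X), mul_nonneg hμ (sq_nonneg ρ)]
  have hseg : ∀ t ∈ Icc (0 : ℝ) 1, ‖g (lineMap X Y t) - 1‖ ≤ μ * dist Y X := fun t ht => by
    refine (hnear _ (hU.lineMap_mem hX hY ht)).trans (mul_le_mul_of_nonneg_left ?_ hμ)
    rw [dist_lineMap_left, Real.norm_of_nonneg ht.1, dist_comm]
    exact mul_le_of_le_one_left dist_nonneg ht.2
  have hlen := (geodDist_le_lengthG (g := g) (contDiff_lineMap X Y).contDiffOn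
    fun t ht => hU.lineMap_mem hX hY ht).trans (lengthG_lineMap_le hseg)
  rw [lineMap_apply_zero, lineMap_apply_one, ← dist_eq_norm] at hlen
  refine ⟨hY, hlen.trans_lt ?_⟩
  have hsqrt : √(1 + μ * dist Y X) ≤ 1 + μ * ρ / 2 :=
    Real.sqrt_le_iff.2 ⟨by positivity, by nlinarith [mul_nonneg hμ (sq_nonneg ρ)]⟩
  have hx : 0 ≤ μ * ρ := mul_nonneg hμ hρ.le
  nlinarith [mul_le_mul_of_nonneg_right hsqrt (dist_nonneg (x := Y) (y := X)),
    mul_lt_mul_of_pos_left hYX (by positivity : 0 < 1 + μ * ρ / 2),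
    mul_nonneg (mul_nonneg hx hx) hρ.le, mul_nonneg hx hρ.le]

theorem dist_lt_of_lengthG_lt (hg : ContinuousOn g U) (hdev : ∀ Z ∈ U, ‖g Z - 1‖ ≤ μ)
    (hnear : ∀ Z ∈ U, ‖g Z - 1‖ ≤ μ * dist Z X) (hμ : μ ≤ 3 / 4)
    (hγ : ContDiffOn ℝ 1 γ (Icc 0 1)) (hγU : ∀ t ∈ Icc (0 : ℝ) 1, γ t ∈ U) (h0 : γ 0 = X)
    (hL : lengthG g γ < ρ) :
    dist (γ 1) X < (1 + 8 * μ * ρ) * ρ := by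
  have hμ0 : 0 ≤ μ := (norm_nonneg _).trans (hdev _ (h0 ▸ hγU 0 (left_mem_Icc.2 zero_le_one)))
  have hρ : 0 < ρ := lengthG_nonneg.trans_lt hL
  have hdist : ∀ t ∈ Icc (0 : ℝ) 1, dist (γ t) X ≤ lengthE γ := fun t ht => by
    rw [dist_eq_norm, ← h0]; exact norm_sub_le_lengthE hγ ht
  have hE : lengthE γ < 2 * ρ := by
    have hcoarse := sqrt_one_sub_mul_lengthE_le_lengthG hg hγ hγU fun t ht => hdev _ (hγU t ht)
    have : 1 / 2 ≤ √(1 - μ) := Real.le_sqrt_of_sq_le (by linarith)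
    nlinarith [lengthE_nonneg (γ := γ)]
  rcases le_or_gt (μ * ρ) (1 / 8) with hμρ | hμρ
  · have hfine := sqrt_one_sub_mul_lengthE_le_lengthG (b := 2 * μ * ρ) hg hγ hγU fun t ht =>
      (hnear _ (hγU t ht)).trans (by nlinarith [hdist t ht])
    set s := √(1 - 2 * μ * ρ)
    have hx : 0 ≤ μ * ρ := mul_nonneg hμ0 hρ.le
    have hs : 1 - 2 * μ * ρ ≤ s := Real.le_sqrt_of_sq_le (by nlinarith)
    have hsρ : ρ ≤ s * ((1 + 8 * μ * ρ) * ρ) := by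
      nlinarith [mul_le_mul_of_nonneg_right hs (by positivity : (0 : ℝ) ≤ (1 + 8 * μ * ρ) * ρ),
        mul_nonneg (mul_nonneg hx (by linarith : (0 : ℝ) ≤ 6 - 16 * (μ * ρ))) hρ.le]
    have hsdist : s * dist (γ 1) X < s * ((1 + 8 * μ * ρ) * ρ) :=
      ((mul_le_mul_of_nonneg_left (hdist 1 (right_mem_Icc.2 zero_le_one))
        (Real.sqrt_nonneg _)).trans hfine).trans_lt (hL.trans_le hsρ)
    exact lt_of_mul_lt_mul_left hsdist (Real.sqrt_nonneg _)
  · nlinarith [hdist 1 (right_mem_Icc.2 zero_le_one)]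

theorem geodBall_subset_ball (hU : Convex ℝ U) (hX : X ∈ U) (hg : ContinuousOn g U)
    (hdev : ∀ Z ∈ U, ‖g Z - 1‖ ≤ μ) (hnear : ∀ Z ∈ U, ‖g Z - 1‖ ≤ μ * dist Z X) (hμ : μ ≤ 3 / 4) :
    geodBall g U X ρ ⊆ Metric.ball X ((1 + 8 * μ * ρ) * ρ) := by
  rintro Y ⟨hY, hYρ⟩
  obtain ⟨γ, hγ, hγU, h0, rfl, hL⟩ := exists_lengthG_lt_of_geodDist_lt hU hX hY hYρ
  exact dist_lt_of_lengthG_lt hg hdev hnear hμ hγ hγU h0 hL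

end Metric

theorem geodesic_ball_comparison_fine_general (n : ℕ)
    (U : Set (EuclideanSpace ℝ (Fin (n+1)))) (hUconv : Convex ℝ U) :
    ∃ μ₀ C : ℝ, μ₀ ∈ Set.Ioo (0:ℝ) 1 ∧ 0 < C ∧
      ∀ g : EuclideanSpace ℝ (Fin (n+1)) → Matrix (Fin (n+1)) (Fin (n+1)) ℝ,
        IsC1Metric g U →
      ∀ μ : ℝ, μ ∈ Set.Ioo (0:ℝ) μ₀ → MuFlat g U μ →
      ∀ X ∈ U, g X = 1 →
      ∀ ρ : ℝ, 0 < ρ →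
        Metric.ball X ((1 - C * μ * ρ) * ρ) ∩ U ⊆ geodBall g U X ρ ∧
        geodBall g U X ρ ⊆ Metric.ball X ((1 + C * μ * ρ) * ρ) := by
  refine ⟨1 / 2, 8, by norm_num, by norm_num, fun g hg μ hμ hflat X hX hgX ρ _ => ?_⟩
  have hdev : ∀ Z ∈ U, ‖g Z - 1‖ ≤ μ := fun Z hZ => frobNorm_eq_norm (g Z - 1) ▸ (hflat Z hZ).1
  have hnear : ∀ Z ∈ U, ‖g Z - 1‖ ≤ μ * dist Z X := fun Z hZ => by
    rw [← hgX, dist_eq_norm]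
    exact norm_sub_le_of_derivMetricNorm_le (hg.1.differentiableOn one_ne_zero) hUconv
      (fun Z hZ => (hflat Z hZ).2) hX hZ
  have hball : Metric.ball X ((1 - 8 * μ * ρ) * ρ) ⊆ Metric.ball X ((1 - μ * ρ) * ρ) :=
    Metric.ball_subset_ball (by nlinarith [mul_nonneg hμ.1.le (sq_nonneg ρ)])
  exact ⟨(inter_subset_inter_left U hball).trans
      (ball_inter_subset_geodBall hUconv hX hμ.1.le hnear),
    geodBall_subset_ball hUconv hX hg.1.continuousOn hdev hnear (by linarith [hμ.2])⟩

/-- For an open bounded convex `U ⊆ ℝ^{n+1}` there exist `μ₀ ∈ (0,1)` and `C > 0`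
such that for every `μ`-flat `C¹` metric `g` on `U` with `μ ∈ (0,μ₀)`, every `X ∈ U`
at which `g(X) = δ` (the identity matrix), and every `ρ > 0`:
`B_{(1−Cμρ)ρ}(X) ∩ U ⊆ B^g_ρ(X) ⊆ B_{(1+Cμρ)ρ}(X)`. -/
theorem geodesic_ball_comparison_fine (n : ℕ) (hn : 1 ≤ n)
    (U : Set (EuclideanSpace ℝ (Fin (n+1)))) (hUopen : IsOpen U)
    (hUbdd : Bornology.IsBounded U) (hUconv : Convex ℝ U) :
    ∃ μ₀ C : ℝ, μ₀ ∈ Set.Ioo (0:ℝ) 1 ∧ 0 < C ∧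
      ∀ g : EuclideanSpace ℝ (Fin (n+1)) → Matrix (Fin (n+1)) (Fin (n+1)) ℝ,
        IsC1Metric g U →
      ∀ μ : ℝ, μ ∈ Set.Ioo (0:ℝ) μ₀ → MuFlat g U μ →
      ∀ X ∈ U, g X = 1 →
      ∀ ρ : ℝ, 0 < ρ →
        Metric.ball X ((1 - C * μ * ρ) * ρ) ∩ U ⊆ geodBall g U X ρ ∧
        geodBall g U X ρ ⊆ Metric.ball X ((1 + C * μ * ρ) * ρ) :=
  geodesic_ball_comparison_fine_general n U hUconv

end
end

section
/- For all real numbers C ≥ 0 and μ ≥ 0 there exist ρ* > 0 and C' ≥ 0, depending only on C and μ, with the following property: for every ρ₁ ∈ (0, ρ*] and every Borel measurable function f : (0, ρ₁] → [0, ∞) that is bounded on [a, ρ₁] for each a ∈ (0, ρ₁), if f(σ) ≤ (1 + Cρ)·f(ρ) + Cμ·∫_σ^ρ f(τ) dτ whenever ρ/2 ≤ σ < ρ ≤ ρ₁, then f(σ) ≤ (1 + C'ρ)·f(ρ) for all 0 < σ < ρ ≤ ρ₁. -/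
open MeasureTheory Set Real
open scoped Interval

/-!
On a single dyadic shell `[ρ/2, ρ]` the supremum `M` of `f` satisfies
`M ≤ (1 + Cρ) f(ρ) + (Cμρ/2) M`, which for small `ρ` can be absorbed into
`f(σ) ≤ M ≤ exp((C + Cμ)ρ) f(ρ)`. Chaining these bounds over the shells
`[ρ/2^(k+1), ρ/2^k]`, the exponents form a geometric series with sum at most `2(C + Cμ)ρ`.
-/

theorem intervalIntegral_le_mul_sub_of_nonneg_of_le {f : ℝ → ℝ} {a b M : ℝ} (hab : a ≤ b)
    (hf0 : ∀ x ∈ Ioc a b, 0 ≤ f x) (hfM : ∀ x ∈ Ioc a b, f x ≤ M) :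
    ∫ x in a..b, f x ≤ M * (b - a) := by
  have hnorm : ∀ x ∈ Ι a b, ‖f x‖ ≤ M := by
    rw [uIoc_of_le hab]
    exact fun x hx => (norm_of_nonneg (hf0 x hx)).trans_le (hfM x hx)
  calc ∫ x in a..b, f x ≤ ‖∫ x in a..b, f x‖ := le_norm_self _
    _ ≤ M * |b - a| := intervalIntegral.norm_integral_le_of_norm_le_const hnorm
    _ = M * (b - a) := by rw [abs_of_nonneg (sub_nonneg.2 hab)]

theorem exp_le_one_add_two_mul {x : ℝ} (hx0 : 0 ≤ x) (hx1 : x ≤ 1) : exp x ≤ 1 + 2 * x := by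
  have h := abs_exp_sub_one_le (x := x) (by rwa [abs_of_nonneg hx0])
  rw [abs_of_nonneg hx0] at h
  linarith [le_abs_self (exp x - 1)]

theorem le_exp_mul_of_le_add_integral_on_Icc_half {f : ℝ → ℝ} {C μ ρ : ℝ}
    (hC : 0 ≤ C) (hμ : 0 ≤ μ) (hρ : 0 < ρ) (hCμρ : C * μ * ρ ≤ 1)
    (hf0 : ∀ x ∈ Icc (ρ / 2) ρ, 0 ≤ f x) (hbdd : BddAbove (f '' Icc (ρ / 2) ρ))
    (hrec : ∀ σ ∈ Ico (ρ / 2) ρ, f σ ≤ (1 + C * ρ) * f ρ + C * μ * ∫ τ in σ..ρ, f τ) :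
    ∀ σ ∈ Icc (ρ / 2) ρ, f σ ≤ exp ((C + C * μ) * ρ) * f ρ := by
  set M := sSup (f '' Icc (ρ / 2) ρ)
  have hρ_mem : ρ ∈ Icc (ρ / 2) ρ := ⟨by linarith, le_rfl⟩
  have hle_M : ∀ x ∈ Icc (ρ / 2) ρ, f x ≤ M := fun x hx => le_csSup hbdd (mem_image_of_mem f hx)
  have hfρ : 0 ≤ f ρ := hf0 ρ hρ_mem
  have hM0 : 0 ≤ M := hfρ.trans (hle_M ρ hρ_mem)
  have hCμ : 0 ≤ C * μ := mul_nonneg hC hμ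
  have hintegral : ∀ σ ∈ Ico (ρ / 2) ρ, ∫ τ in σ..ρ, f τ ≤ ρ / 2 * M := fun σ hσ =>
    have hsub : Ioc σ ρ ⊆ Icc (ρ / 2) ρ := Ioc_subset_Icc_self.trans (Icc_subset_Icc_left hσ.1)
    calc ∫ τ in σ..ρ, f τ ≤ M * (ρ - σ) := intervalIntegral_le_mul_sub_of_nonneg_of_le hσ.2.le
            (fun x hx => hf0 x (hsub hx)) (fun x hx => hle_M x (hsub hx))
      _ ≤ ρ / 2 * M := by nlinarith [hσ.1]
  have hpoint : ∀ σ ∈ Icc (ρ / 2) ρ, f σ ≤ (1 + C * ρ) * f ρ + C * μ * ρ / 2 * M := by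
    intro σ hσ
    rcases hσ.2.eq_or_lt with rfl | hσρ
    · nlinarith [mul_nonneg (mul_nonneg hC hρ.le) hfρ, mul_nonneg (mul_nonneg hCμ hρ.le) hM0]
    · calc f σ ≤ (1 + C * ρ) * f ρ + C * μ * ∫ τ in σ..ρ, f τ := hrec σ ⟨hσ.1, hσρ⟩
        _ ≤ (1 + C * ρ) * f ρ + C * μ * ρ / 2 * M := by
          nlinarith [mul_le_mul_of_nonneg_left (hintegral σ ⟨hσ.1, hσρ⟩) hCμ]
  have hM : M ≤ (1 + C * ρ) * f ρ + C * μ * ρ / 2 * M :=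
    csSup_le ⟨f ρ, mem_image_of_mem f hρ_mem⟩ (forall_mem_image.2 hpoint)
  -- absorb the `M` on the right: `(1 + 2a)(1 - a) ≥ 1` for `0 ≤ a ≤ 1/2`
  have hM' : M ≤ (1 + C * μ * ρ) * ((1 + C * ρ) * f ρ) := by
    have ha : 0 ≤ C * μ * ρ := mul_nonneg hCμ hρ.le
    nlinarith [mul_nonneg (mul_nonneg ha (by linarith : 0 ≤ 1 - C * μ * ρ)) hM0]
  intro σ hσ
  calc f σ ≤ (1 + C * μ * ρ) * ((1 + C * ρ) * f ρ) := (hle_M σ hσ).trans hM'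
    _ ≤ exp (C * μ * ρ) * (exp (C * ρ) * f ρ) := by
      gcongr
      · linarith [add_one_le_exp (C * μ * ρ)]
      · linarith [add_one_le_exp (C * ρ)]
    _ = exp ((C + C * μ) * ρ) * f ρ := by rw [← mul_assoc, ← exp_add]; ring_nf

theorem le_exp_two_mul_of_le_exp_mul_on_Icc_half {g : ℝ → ℝ} {K ρ₁ : ℝ} (hK : 0 ≤ K)
    (hg : ∀ x ∈ Ioc 0 ρ₁, 0 ≤ g x)
    (hstep : ∀ σ ρ, 0 < σ → ρ / 2 ≤ σ → σ ≤ ρ → ρ ≤ ρ₁ → g σ ≤ exp (K * ρ) * g ρ)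
    {σ ρ : ℝ} (hσ : 0 < σ) (hσρ : σ ≤ ρ) (hρ : ρ ≤ ρ₁) :
    g σ ≤ exp (2 * K * ρ) * g ρ := by
  obtain ⟨k, hk⟩ : ∃ k : ℕ, ρ / σ < 2 ^ k := pow_unbounded_of_one_lt _ one_lt_two
  rw [div_lt_iff₀ hσ] at hk
  induction k generalizing ρ with
  | zero =>
    obtain rfl : ρ = σ := by linarith
    exact le_mul_of_one_le_left (hg ρ ⟨hσ, hρ⟩) (one_le_exp (by positivity))
  | succ k ih =>
    have hgρ : 0 ≤ g ρ := hg ρ ⟨hσ.trans_le hσρ, hρ⟩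
    by_cases hhalf : ρ / 2 ≤ σ
    · calc g σ ≤ exp (K * ρ) * g ρ := hstep σ ρ hσ hhalf hσρ hρ
        _ ≤ exp (2 * K * ρ) * g ρ := by
          gcongr exp ?_ * _
          nlinarith [mul_nonneg hK (hσ.le.trans hσρ)]
    · rw [not_le] at hhalf
      calc g σ ≤ exp (2 * K * (ρ / 2)) * g (ρ / 2) :=
            ih hhalf.le (by linarith) (by rw [pow_succ] at hk; linarith)
        _ ≤ exp (K * ρ) * (exp (K * ρ) * g ρ) := by
          rw [show 2 * K * (ρ / 2) = K * ρ by ring]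
          gcongr
          exact hstep (ρ / 2) ρ (hσ.trans hhalf) le_rfl (by linarith) hρ
        _ = exp (2 * K * ρ) * g ρ := by rw [← mul_assoc, ← exp_add]; ring_nf

/-- Gronwall-type dyadic iteration: if a nonnegative locally bounded Borel function
`f` on `(0, ρ₁]` satisfies `f(σ) ≤ (1 + Cρ) f(ρ) + Cμ ∫_σ^ρ f` whenever
`ρ/2 ≤ σ < ρ ≤ ρ₁`, with `ρ₁` small enough (depending only on `C`, `μ`), then
`f(σ) ≤ (1 + C'ρ) f(ρ)` for all `0 < σ < ρ ≤ ρ₁`, with `C'` depending only on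
`C` and `μ`. -/
theorem dyadic_gronwall_iteration (C μ : ℝ) (hC : 0 ≤ C) (hμ : 0 ≤ μ) :
    ∃ ρStar C' : ℝ, 0 < ρStar ∧ 0 ≤ C' ∧
      ∀ ρ₁ : ℝ, 0 < ρ₁ → ρ₁ ≤ ρStar →
      ∀ f : ℝ → ℝ, Measurable f →
        (∀ x ∈ Set.Ioc (0:ℝ) ρ₁, 0 ≤ f x) →
        (∀ a ∈ Set.Ioo (0:ℝ) ρ₁, BddAbove (f '' Set.Icc a ρ₁)) →
        (∀ σ ρ : ℝ, ρ / 2 ≤ σ → σ < ρ → ρ ≤ ρ₁ →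
          f σ ≤ (1 + C * ρ) * f ρ + C * μ * ∫ τ in σ..ρ, f τ) →
        ∀ σ ρ : ℝ, 0 < σ → σ < ρ → ρ ≤ ρ₁ → f σ ≤ (1 + C' * ρ) * f ρ := by
  set K := C + C * μ
  have hK : 0 ≤ K := add_nonneg hC (mul_nonneg hC hμ)
  refine ⟨1 / (2 * K + 1), 4 * K, by positivity, by positivity, ?_⟩
  intro ρ₁ hρ₁ hρ₁_le f _ hf0 hbdd hrec σ ρ hσ hσρ hρ
  have hsmall : 2 * K * ρ₁ ≤ 1 := by
    have := (le_div_iff₀ (by positivity)).1 hρ₁_le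
    nlinarith
  have hstep : ∀ σ ρ, 0 < σ → ρ / 2 ≤ σ → σ ≤ ρ → ρ ≤ ρ₁ → f σ ≤ exp (K * ρ) * f ρ :=
    fun σ ρ hσ hhalf hσρ hρ =>
      le_exp_mul_of_le_add_integral_on_Icc_half hC hμ (by linarith)
        (by nlinarith [mul_nonneg (mul_nonneg hC hμ) hσ.le])
        (fun x hx => hf0 x ⟨by linarith [hx.1], hx.2.trans hρ⟩)
        ((hbdd (ρ / 2) ⟨by linarith, by linarith⟩).mono (image_mono (Icc_subset_Icc_right hρ)))
        (fun τ hτ => hrec τ ρ hτ.1 hτ.2 hρ) σ ⟨hhalf, hσρ⟩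
  have hexp : exp (2 * K * ρ) ≤ 1 + 4 * K * ρ := by
    have := exp_le_one_add_two_mul (x := 2 * K * ρ) (by nlinarith) (by nlinarith)
    linarith
  calc f σ ≤ exp (2 * K * ρ) * f ρ :=
        le_exp_two_mul_of_le_exp_mul_on_Icc_half hK hf0 hstep hσ hσρ.le hρ
    _ ≤ (1 + 4 * K * ρ) * f ρ := by gcongr; exact hf0 ρ ⟨hσ.trans hσρ, hρ⟩
end

section
/- Let C ≥ 0, ρ₀ > 0, and let h : (0, ρ₀) → [0, ∞) be a function satisfying h(σ) ≤ (1 + Cρ)·h(ρ) + Cρ whenever 0 < 2σ ≤ ρ < ρ₀. Then the limit lim_{ρ → 0⁺} h(ρ) exists and is a finite nonnegative real number. -/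
/-!
For every small `ρ`, all `h σ` with `σ ≤ ρ / 2` are bounded by `(1 + Cρ) h(ρ) + Cρ`, so this
bound controls `limsup h`. The bound exceeds `h(ρ)` by `Cρ (h(ρ) + 1) → 0` (`h` is bounded near
`0`), and choosing `ρ` with `h(ρ)` close to `liminf h` yields `limsup h ≤ liminf h`.
-/

open Filter Topology

namespace Filter

variable {α : Type*} {l : Filter α} {f g : α → ℝ}

theorem isBoundedUnder_le_of_eventually_eventually_le [l.NeBot]
    (hle : ∀ᶠ ρ in l, ∀ᶠ x in l, f x ≤ g ρ) : l.IsBoundedUnder (· ≤ ·) f :=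
  let ⟨_, hρ⟩ := hle.exists
  isBoundedUnder_of_eventually_le hρ

theorem tendsto_liminf_of_eventually_eventually_le_of_tendsto_sub [l.NeBot]
    (hbdd : l.IsBoundedUnder (· ≥ ·) f) (hle : ∀ᶠ ρ in l, ∀ᶠ x in l, f x ≤ g ρ)
    (hgf : Tendsto (g - f) l (𝓝 0)) : Tendsto f l (𝓝 (liminf f l)) := by
  have habove := isBoundedUnder_le_of_eventually_eventually_le hle
  refine tendsto_of_le_liminf_of_limsup_le le_rfl (le_of_forall_pos_lt_add fun ε hε => ?_)
    habove hbdd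
  have hnear : ∀ᶠ ρ in l, g ρ - f ρ < ε / 2 := hgf.eventually (gt_mem_nhds (half_pos hε))
  have hlow : ∃ᶠ ρ in l, f ρ < liminf f l + ε / 2 :=
    frequently_lt_of_liminf_lt habove.isCoboundedUnder_ge (by linarith)
  obtain ⟨ρ, hfρ, hgρ, hρ⟩ := (hlow.and_eventually (hnear.and hle)).exists
  calc limsup f l ≤ g ρ := limsup_le_of_le hbdd.isCoboundedUnder_le hρ
    _ < liminf f l + ε := by linarith

end Filter

theorem limit_exists_of_almost_monotone_general (C ρ₀ : ℝ) (hρ₀ : 0 < ρ₀)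
    (h : ℝ → ℝ)
    (hnn : ∀ ρ ∈ Set.Ioo (0:ℝ) ρ₀, 0 ≤ h ρ)
    (hmono : ∀ σ ρ : ℝ, 0 < σ → 2 * σ ≤ ρ → ρ < ρ₀ →
      h σ ≤ (1 + C * ρ) * h ρ + C * ρ) :
    ∃ L : ℝ, 0 ≤ L ∧ Tendsto h (nhdsWithin 0 (Set.Ioi 0)) (nhds L) := by
  have hsmall : ∀ c > 0, ∀ᶠ x in 𝓝[>] (0 : ℝ), x ∈ Set.Ioo 0 c := fun c hc => Ioo_mem_nhdsGT hc
  have hnn' : ∀ᶠ x in 𝓝[>] (0 : ℝ), 0 ≤ h x := (hsmall ρ₀ hρ₀).mono hnn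
  have hle : ∀ᶠ ρ in 𝓝[>] (0 : ℝ), ∀ᶠ σ in 𝓝[>] (0 : ℝ),
      h σ ≤ (1 + C * ρ) * h ρ + C * ρ := by
    filter_upwards [hsmall ρ₀ hρ₀] with ρ hρ
    filter_upwards [hsmall (ρ / 2) (half_pos hρ.1)] with σ hσ
    exact hmono σ ρ hσ.1 (by linarith [hσ.2]) hρ.2
  have hbelow := isBoundedUnder_of_eventually_ge hnn'
  have hh : IsBoundedUnder (· ≤ ·) (𝓝[>] 0) ((‖·‖) ∘ h) :=
    isBoundedUnder_le_abs.2 ⟨isBoundedUnder_le_of_eventually_eventually_le hle, hbelow⟩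
  have hCρ : Tendsto (fun ρ : ℝ => C * ρ) (𝓝[>] 0) (𝓝 0) :=
    tendsto_nhdsWithin_of_tendsto_nhds ((continuous_const_mul C).tendsto' 0 0 (mul_zero C))
  have hgap : Tendsto (fun ρ => ((1 + C * ρ) * h ρ + C * ρ) - h ρ) (𝓝[>] 0) (𝓝 0) := by
    convert (hCρ.zero_mul_isBoundedUnder_le hh).add hCρ using 2 <;> ring
  have hlim := tendsto_liminf_of_eventually_eventually_le_of_tendsto_sub hbelow hle hgap
  exact ⟨_, ge_of_tendsto hlim hnn', hlim⟩

/-- If a nonnegative function `h` on `(0, ρ₀)` satisfies the almost-monotonicity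
inequality `h(σ) ≤ (1 + Cρ) h(ρ) + Cρ` whenever `0 < 2σ ≤ ρ < ρ₀`, then the
limit `lim_{ρ → 0⁺} h(ρ)` exists and is a finite nonnegative real number. -/
theorem limit_exists_of_almost_monotone (C ρ₀ : ℝ) (hC : 0 ≤ C) (hρ₀ : 0 < ρ₀)
    (h : ℝ → ℝ)
    (hnn : ∀ ρ ∈ Set.Ioo (0:ℝ) ρ₀, 0 ≤ h ρ)
    (hmono : ∀ σ ρ : ℝ, 0 < σ → 2 * σ ≤ ρ → ρ < ρ₀ →
      h σ ≤ (1 + C * ρ) * h ρ + C * ρ) :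
    ∃ L : ℝ, 0 ≤ L ∧ Tendsto h (nhdsWithin 0 (Set.Ioi 0)) (nhds L) :=
  limit_exists_of_almost_monotone_general C ρ₀ hρ₀ h hnn hmono
end

section
/- Let n ≥ 1 and N ≥ 1 be integers and U ⊆ ℝ^N an open set. Let μ and μ_k (k ∈ ℕ) be Radon measures on U with μ_k → μ, in the sense that ∫ f dμ_k → ∫ f dμ for every continuous f : U → ℝ with compact support. Let x ∈ U, let x_k ∈ U with x_k → x, fix C ≥ 0 and r₀ > 0 with the closed Euclidean ball of radius 2r₀ about x contained in U and with |x_k − x| ≤ r₀ for all k. Assume that for every k and all 0 < σ < ρ ≤ r₀: σ^{−n}·μ_k(B_σ(x_k)) ≤ (1 + Cρ)·ρ^{−n}·μ_k(B_ρ(x_k)) + Cρ. Then the n-dimensional densities Θⁿ(μ_k, x_k) and Θⁿ(μ, x) all exist, and Θⁿ(μ, x) ≥ limsup_{k → ∞} Θⁿ(μ_k, x_k). -/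
open MeasureTheory Filter

noncomputable section

/-- `ω_n`: the Lebesgue volume of the unit ball of `ℝⁿ`. -/
def unitBallVol (n : ℕ) : ℝ :=
  (volume (Metric.ball (0 : EuclideanSpace ℝ (Fin n)) 1)).toReal

/-- The `n`-dimensional density ratio `μ(B_ρ(x)) / (ω_n ρⁿ)`. -/
def densRatio {N : ℕ} (n : ℕ) (μ : Measure (EuclideanSpace ℝ (Fin N)))
    (x : EuclideanSpace ℝ (Fin N)) (ρ : ℝ) : ℝ :=
  (μ (Metric.ball x ρ)).toReal / (unitBallVol n * ρ ^ n)

/-!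
Testing the convergence `μ_k → μ` against bump functions squeezes the ball masses: for `s < t`
and `k` large, `μ(B_s(x)) ≤ μ_k(B_t(x_k)) + ε` and `μ_k(B_s(x_k)) ≤ μ(B_t(x)) + ε`. Together these
carry the almost-monotonicity of the mass ratios from the `μ_k` over to `μ`, and a nonnegative
almost-monotone function has a limit at `0⁺`, so all densities exist. Finally
`Θⁿ(μ_k, x_k) ≤ (1 + Cρ) ρ⁻ⁿ μ_k(B_ρ(x_k)) + Cρ`, which for large `k` is at most about the same
expression for `μ`, and that tends to `Θⁿ(μ, x)` as `ρ → 0`.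
-/

open Metric Set Topology

def AlmostMonotone (C r : ℝ) (f : ℝ → ℝ) : Prop :=
  ∀ σ ρ, 0 < σ → σ < ρ → ρ ≤ r → f σ ≤ (1 + C * ρ) * f ρ + C * ρ

namespace AlmostMonotone

variable {C r : ℝ} {f : ℝ → ℝ}

theorem le_of_tendsto (hf : AlmostMonotone C r f) {L : ℝ} (hL : Tendsto f (𝓝[>] 0) (𝓝 L))
    {ρ : ℝ} (hρ : 0 < ρ) (hρr : ρ ≤ r) : L ≤ (1 + C * ρ) * f ρ + C * ρ :=
  _root_.le_of_tendsto hL <| mem_of_superset (Ioo_mem_nhdsGT hρ) fun _ hσ => hf _ _ hσ.1 hσ.2 hρr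

theorem exists_tendsto (hf : AlmostMonotone C r f) (hC : 0 ≤ C) (hr : 0 < r)
    (hf0 : ∀ ρ, 0 < ρ → 0 ≤ f ρ) : ∃ L, Tendsto f (𝓝[>] 0) (𝓝 L) := by
  set A := (1 + C * r) * f r + C * r
  have hsmall : ∀ᶠ ρ in 𝓝[>] (0 : ℝ), ρ ∈ Ioo 0 r := Ioo_mem_nhdsGT hr
  have hbdd : IsBoundedUnder (· ≤ ·) (𝓝[>] 0) f :=
    ⟨A, hsmall.mono fun ρ hρ => hf ρ r hρ.1 hρ.2 le_rfl⟩
  have hbdd' : IsBoundedUnder (· ≥ ·) (𝓝[>] 0) f := ⟨0, eventually_mem_nhdsWithin.mono hf0⟩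
  refine ⟨_, tendsto_of_le_liminf_of_limsup_le ?_ le_rfl hbdd hbdd'⟩
  refine le_of_forall_pos_le_add fun ε hε => ?_
  have hCρ : Tendsto (fun ρ => C * ρ * (A + 1)) (𝓝[>] 0) (𝓝 0) :=
    ((continuous_mul_const (A + 1)).comp (continuous_const_mul C)).tendsto' 0 0 (by simp)
      |>.mono_left nhdsWithin_le_nhds
  suffices limsup f (𝓝[>] 0) - ε ≤ liminf f (𝓝[>] 0) by linarith
  refine le_liminf_of_le hbdd.isCoboundedUnder_ge ?_
  -- `limsup f ≤ (1 + C ρ) f ρ + C ρ ≤ f ρ + C ρ (A + 1)`, as `f ≤ A` on `(0, r)`.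
  filter_upwards [hsmall, hCρ.eventually (gt_mem_nhds hε)] with ρ hρ hρε
  have hlimsup : limsup f (𝓝[>] 0) ≤ (1 + C * ρ) * f ρ + C * ρ :=
    limsup_le_of_le hbdd'.isCoboundedUnder_le <|
      mem_of_superset (Ioo_mem_nhdsGT hρ.1) fun σ hσ => hf σ ρ hσ.1 hσ.2 hρ.2.le
  have hfA : f ρ ≤ A := hf ρ r hρ.1 hρ.2 le_rfl
  have : 0 ≤ C * ρ := mul_nonneg hC hρ.1.le
  nlinarith

end AlmostMonotone

section Transfer

variable {ι : Type*} {l : Filter ι} {C r : ℝ} {n : ℕ} {m : ℝ → ℝ} {mk : ι → ℝ → ℝ}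

theorem AlmostMonotone.of_eventually_le_add [l.NeBot] (hC : 0 ≤ C)
    (hmk : ∀ k, AlmostMonotone C r fun ρ => mk k ρ / ρ ^ n)
    (hlow : ∀ s t, 0 < s → s < t → t ≤ r → ∀ ε > 0, ∀ᶠ k in l, m s ≤ mk k t + ε)
    (hupp : ∀ s t, 0 < s → s < t → t ≤ r → ∀ ε > 0, ∀ᶠ k in l, mk k s ≤ m t + ε) :
    AlmostMonotone C r fun ρ => m ρ / ρ ^ n := by
  intro σ ρ hσ hσρ hρr
  rw [div_le_iff₀ (pow_pos hσ n), mul_comm]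
  -- Route through `mk k (σ + t)` and `mk k (ρ - t)` for one suitable `k`, then let `t → 0`.
  set F : ℝ → ℝ := fun t =>
    (σ + t) ^ n * ((1 + C * (ρ - t)) * ((m ρ + t) / (ρ - t) ^ n) + C * (ρ - t)) + t
  have hF : Tendsto F (𝓝[>] 0) (𝓝 (F 0)) := by
    refine ContinuousAt.tendsto ?_ |>.mono_left nhdsWithin_le_nhds
    fun_prop (disch := simp [(hσ.trans hσρ).ne'])
  convert ge_of_tendsto hF ?_ using 1
  · simp [F]
  filter_upwards [Ioo_mem_nhdsGT (half_pos (sub_pos.2 hσρ))] with t ⟨ht, htδ⟩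
  obtain ⟨k, hk_low, hk_upp⟩ :=
    ((hlow σ (σ + t) hσ (by linarith) (by linarith) t ht).and
      (hupp (ρ - t) ρ (by linarith) (by linarith) hρr t ht)).exists
  have hk := hmk k (σ + t) (ρ - t) (by linarith) (by linarith) (by linarith)
  rw [div_le_iff₀ (pow_pos (by linarith) n), mul_comm] at hk
  have : 0 ≤ 1 + C * (ρ - t) := by nlinarith
  calc m σ ≤ mk k (σ + t) + t := hk_low
    _ ≤ (σ + t) ^ n * ((1 + C * (ρ - t)) * (mk k (ρ - t) / (ρ - t) ^ n) + C * (ρ - t)) + t := by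
      linarith
    _ ≤ F t := by
      simp only [F]
      gcongr
      exact pow_nonneg (by linarith) n

theorem eventually_lt_of_tendsto_of_eventually_le_add (hC : 0 ≤ C) (hr : 0 < r)
    (hmk : ∀ k, AlmostMonotone C r fun ρ => mk k ρ / ρ ^ n)
    (hupp : ∀ s t, 0 < s → s < t → t ≤ r → ∀ ε > 0, ∀ᶠ k in l, mk k s ≤ m t + ε)
    {d : ι → ℝ} (hd : ∀ k, Tendsto (fun ρ => mk k ρ / ρ ^ n) (𝓝[>] 0) (𝓝 (d k)))
    {e : ℝ} (he : Tendsto (fun ρ => m ρ / ρ ^ n) (𝓝[>] 0) (𝓝 e)) :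
    ∀ c > e, ∀ᶠ k in l, d k < c := by
  intro c hc
  have hCρ : Tendsto (fun ρ => C * ρ) (𝓝[>] 0) (𝓝 0) :=
    (continuous_const_mul C).tendsto' 0 0 (mul_zero C) |>.mono_left nhdsWithin_le_nhds
  have hH : Tendsto (fun ρ => (1 + C * ρ) * (m ρ / ρ ^ n) + C * ρ) (𝓝[>] 0) (𝓝 e) := by
    simpa using (((tendsto_const_nhds (x := (1 : ℝ))).add hCρ).mul he).add hCρ
  obtain ⟨ρ, hρc, hρ⟩ :=
    ((hH.eventually (gt_mem_nhds hc)).and (Ioc_mem_nhdsGT hr)).exists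
  set G : ℝ → ℝ := fun t => (1 + C * (ρ - t)) * ((m ρ + t) / (ρ - t) ^ n) + C * (ρ - t)
  have hG : Tendsto G (𝓝[>] 0) (𝓝 (G 0)) := by
    refine ContinuousAt.tendsto ?_ |>.mono_left nhdsWithin_le_nhds
    fun_prop (disch := simp [hρ.1.ne'])
  have hG0 : G 0 < c := by simpa [G] using hρc
  obtain ⟨t, htc, ht, htρ⟩ :=
    ((hG.eventually (gt_mem_nhds hG0)).and (Ioo_mem_nhdsGT hρ.1)).exists
  filter_upwards [hupp (ρ - t) ρ (by linarith) (by linarith) hρ.2 t ht] with k hk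
  have : 0 ≤ 1 + C * (ρ - t) := by nlinarith
  calc d k ≤ (1 + C * (ρ - t)) * (mk k (ρ - t) / (ρ - t) ^ n) + C * (ρ - t) :=
        (hmk k).le_of_tendsto (hd k) (by linarith) (by linarith [hρ.2])
    _ ≤ G t := by
      simp only [G]
      gcongr
    _ < c := htc

end Transfer

section Bump

variable {E : Type*} [NormedAddCommGroup E] [NormedSpace ℝ E] [HasContDiffBump E]
  [MeasurableSpace E] [BorelSpace E] {μ : Measure E} {c : E}

theorem ContDiffBump.integrable_of_ne_top (f : ContDiffBump c)
    (hμ : μ (closedBall c f.rOut) ≠ ⊤) : Integrable f μ := by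
  rw [← integrableOn_iff_integrable_of_support_subset
    (f.support_eq.trans_subset ball_subset_closedBall)]
  exact Measure.integrableOn_of_bounded hμ f.continuous.aestronglyMeasurable
    (M := 1) (ae_of_all _ fun y => by simp [abs_of_nonneg f.nonneg, f.le_one])

theorem ContDiffBump.measureReal_closedBall_le_integral (f : ContDiffBump c)
    (hμ : μ (closedBall c f.rOut) ≠ ⊤) : μ.real (closedBall c f.rIn) ≤ ∫ y, f y ∂μ := by
  rw [← integral_indicator_one measurableSet_closedBall]
  refine integral_mono ?_ (f.integrable_of_ne_top hμ) fun y => ?_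
  · exact (integrable_indicator_iff measurableSet_closedBall).2
      (integrableOn_const (C := (1 : ℝ))
        (measure_ne_top_of_subset (closedBall_subset_closedBall f.rIn_lt_rOut.le) hμ))
  · by_cases hy : y ∈ closedBall c f.rIn
    · simp [hy, f.one_of_mem_closedBall hy]
    · simp [hy, f.nonneg]

theorem ContDiffBump.integral_le_measureReal_ball (f : ContDiffBump c)
    (hμ : μ (closedBall c f.rOut) ≠ ⊤) : ∫ y, f y ∂μ ≤ μ.real (ball c f.rOut) := by
  rw [← integral_indicator_one measurableSet_ball]
  refine integral_mono (f.integrable_of_ne_top hμ) ?_ fun y => ?_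
  · exact (integrable_indicator_iff measurableSet_ball).2
      (integrableOn_const (C := (1 : ℝ)) (measure_ne_top_of_subset ball_subset_closedBall hμ))
  · by_cases hy : y ∈ ball c f.rOut
    · simp [hy, f.le_one]
    · simp [← f.support_eq] at hy ⊢; simp [hy]

end Bump

section MovingBalls

variable {E : Type*} [NormedAddCommGroup E] [NormedSpace ℝ E] [HasContDiffBump E]
  [FiniteDimensional ℝ E] [MeasurableSpace E] [BorelSpace E]
  {ι : Type*} {l : Filter ι} {μ : Measure E} {μk : ι → Measure E} {x : E} {xk : ι → E}
  {R s t ε : ℝ}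

theorem eventually_measureReal_ball_le_ball_seq_add
    (hconv : ∀ φ : E → ℝ, Continuous φ → HasCompactSupport φ → tsupport φ ⊆ closedBall x R →
      Tendsto (fun k => ∫ y, φ y ∂μk k) l (𝓝 (∫ y, φ y ∂μ)))
    (hμ : μ (closedBall x R) ≠ ⊤) (hμk : ∀ k, μk k (closedBall x R) ≠ ⊤)
    (hxk : Tendsto xk l (𝓝 x)) (hs : 0 < s) (hst : s < t) (htR : t < R) (hε : 0 < ε) :
    ∀ᶠ k in l, μ.real (ball x s) ≤ (μk k).real (ball (xk k) t) + ε := by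
  let f : ContDiffBump x := ⟨s, (s + t) / 2, hs, by linarith⟩
  have hfR : closedBall x f.rOut ⊆ closedBall x R :=
    closedBall_subset_closedBall (by simp only [f]; linarith)
  have hμf : μ (closedBall x f.rOut) ≠ ⊤ := measure_ne_top_of_subset hfR hμ
  have hint := hconv f f.continuous f.hasCompactSupport (f.tsupport_eq.trans_subset hfR)
  filter_upwards [hint.eventually (lt_mem_nhds (sub_lt_self _ hε)),
    hxk.eventually (ball_mem_nhds x (lt_min (half_pos (sub_pos.2 hst)) (sub_pos.2 htR)))]
    with k hk hxk
  rw [lt_min_iff] at hxk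
  have hball : ball x f.rOut ⊆ ball (xk k) t :=
    ball_subset_ball' (by rw [dist_comm]; simp only [f]; linarith)
  have hballR : ball (xk k) t ⊆ closedBall x R :=
    (ball_subset_ball' (by linarith)).trans ball_subset_closedBall
  calc μ.real (ball x s) ≤ μ.real (closedBall x f.rIn) :=
        measureReal_mono ball_subset_closedBall
          (measure_ne_top_of_subset (closedBall_subset_closedBall f.rIn_lt_rOut.le) hμf)
    _ ≤ ∫ y, f y ∂μ := f.measureReal_closedBall_le_integral hμf
    _ ≤ ∫ y, f y ∂μk k + ε := by linarith
    _ ≤ (μk k).real (ball x f.rOut) + ε := by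
      gcongr
      exact f.integral_le_measureReal_ball (measure_ne_top_of_subset hfR (hμk k))
    _ ≤ (μk k).real (ball (xk k) t) + ε := by
      gcongr
      exact measure_ne_top_of_subset hballR (hμk k)

theorem eventually_measureReal_ball_seq_le_ball_add
    (hconv : ∀ φ : E → ℝ, Continuous φ → HasCompactSupport φ → tsupport φ ⊆ closedBall x R →
      Tendsto (fun k => ∫ y, φ y ∂μk k) l (𝓝 (∫ y, φ y ∂μ)))
    (hμ : μ (closedBall x R) ≠ ⊤) (hμk : ∀ k, μk k (closedBall x R) ≠ ⊤)
    (hxk : Tendsto xk l (𝓝 x)) (hs : 0 < s) (hst : s < t) (htR : t < R) (hε : 0 < ε) :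
    ∀ᶠ k in l, (μk k).real (ball (xk k) s) ≤ μ.real (ball x t) + ε := by
  let f : ContDiffBump x := ⟨(s + t) / 2, t, by linarith, by linarith⟩
  have hfR : closedBall x f.rOut ⊆ closedBall x R := closedBall_subset_closedBall htR.le
  have hint := hconv f f.continuous f.hasCompactSupport (f.tsupport_eq.trans_subset hfR)
  filter_upwards [hint.eventually (gt_mem_nhds (lt_add_of_pos_right _ hε)),
    hxk.eventually (ball_mem_nhds x (half_pos (sub_pos.2 hst)))] with k hk hxk
  have hball : ball (xk k) s ⊆ closedBall x f.rIn :=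
    (ball_subset_ball' (by simp only [f]; linarith [mem_ball.1 hxk])).trans ball_subset_closedBall
  have hμkf : μk k (closedBall x f.rOut) ≠ ⊤ := measure_ne_top_of_subset hfR (hμk k)
  calc (μk k).real (ball (xk k) s) ≤ (μk k).real (closedBall x f.rIn) :=
        measureReal_mono hball
          (measure_ne_top_of_subset (closedBall_subset_closedBall f.rIn_lt_rOut.le) hμkf)
    _ ≤ ∫ y, f y ∂μk k := f.measureReal_closedBall_le_integral hμkf
    _ ≤ ∫ y, f y ∂μ + ε := hk.le
    _ ≤ μ.real (ball x t) + ε := by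
      gcongr
      exact f.integral_le_measureReal_ball (measure_ne_top_of_subset hfR hμ)

end MovingBalls

theorem unitBallVol_pos (n : ℕ) : 0 < unitBallVol n :=
  ENNReal.toReal_pos (measure_ball_pos volume 0 one_pos).ne' measure_ball_lt_top.ne

theorem densRatio_eq {N : ℕ} (n : ℕ) (μ : Measure (EuclideanSpace ℝ (Fin N)))
    (x : EuclideanSpace ℝ (Fin N)) (ρ : ℝ) :
    densRatio n μ x ρ = μ.real (ball x ρ) / ρ ^ n / unitBallVol n := by
  rw [densRatio, mul_comm, ← div_div, measureReal_def]

theorem density_upper_semicontinuous_general {N n : ℕ}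
    (U : Set (EuclideanSpace ℝ (Fin N)))
    (μ : Measure (EuclideanSpace ℝ (Fin N)))
    (μk : ℕ → Measure (EuclideanSpace ℝ (Fin N)))
    (hμfin : ∀ K : Set (EuclideanSpace ℝ (Fin N)), K ⊆ U → IsCompact K → μ K ≠ ⊤)
    (hμkfin : ∀ k, ∀ K : Set (EuclideanSpace ℝ (Fin N)), K ⊆ U → IsCompact K →
      μk k K ≠ ⊤)
    (hconv : ∀ f : EuclideanSpace ℝ (Fin N) → ℝ, Continuous f →
      HasCompactSupport f → tsupport f ⊆ U →
      Tendsto (fun k => ∫ y, f y ∂(μk k)) atTop (nhds (∫ y, f y ∂μ)))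
    (x : EuclideanSpace ℝ (Fin N))
    (xk : ℕ → EuclideanSpace ℝ (Fin N))
    (hxk : Tendsto xk atTop (nhds x))
    (C r₀ : ℝ) (hC : 0 ≤ C) (hr₀ : 0 < r₀)
    (hball : Metric.closedBall x (2 * r₀) ⊆ U)
    (hmono : ∀ k, ∀ σ ρ : ℝ, 0 < σ → σ < ρ → ρ ≤ r₀ →
      ((μk k) (Metric.ball (xk k) σ)).toReal / σ ^ n ≤
        (1 + C * ρ) * (((μk k) (Metric.ball (xk k) ρ)).toReal / ρ ^ n) + C * ρ) :
    ∃ d : ℝ, ∃ dk : ℕ → ℝ,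
      Tendsto (fun ρ => densRatio n μ x ρ) (nhdsWithin 0 (Set.Ioi 0)) (nhds d) ∧
      (∀ k, Tendsto (fun ρ => densRatio n (μk k) (xk k) ρ)
        (nhdsWithin 0 (Set.Ioi 0)) (nhds (dk k))) ∧
      limsup dk atTop ≤ d := by
  have hμR : μ (closedBall x (2 * r₀)) ≠ ⊤ := hμfin _ hball (isCompact_closedBall x _)
  have hμkR k : μk k (closedBall x (2 * r₀)) ≠ ⊤ := hμkfin k _ hball (isCompact_closedBall x _)
  have hconvR φ hφ hφc (hφR : tsupport φ ⊆ closedBall x (2 * r₀)) :=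
    hconv φ hφ hφc (hφR.trans hball)
  have hmk k : AlmostMonotone C r₀ fun ρ => (μk k).real (ball (xk k) ρ) / ρ ^ n := hmono k
  have hupp s t (hs : 0 < s) (hst : s < t) (ht : t ≤ r₀) ε (hε : 0 < ε) :=
    eventually_measureReal_ball_seq_le_ball_add hconvR hμR hμkR hxk hs hst (by linarith) hε
  have hμ : AlmostMonotone C r₀ fun ρ => μ.real (ball x ρ) / ρ ^ n :=
    .of_eventually_le_add hC hmk (fun s t hs hst ht ε hε =>
      eventually_measureReal_ball_le_ball_seq_add hconvR hμR hμkR hxk hs hst (by linarith) hε) hupp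
  obtain ⟨e, he⟩ := hμ.exists_tendsto hC hr₀ fun ρ hρ => by positivity
  choose d hd using fun k => (hmk k).exists_tendsto hC hr₀ fun ρ hρ => by positivity
  have hd_lt := eventually_lt_of_tendsto_of_eventually_le_add hC hr₀ hmk hupp hd he
  have hd0 k : 0 ≤ d k :=
    ge_of_tendsto (hd k) <| eventually_mem_nhdsWithin.mono fun ρ (hρ : 0 < ρ) => by positivity
  have hω := unitBallVol_pos n
  refine ⟨e / unitBallVol n, fun k => d k / unitBallVol n, ?_, fun k => ?_, ?_⟩
  · simpa only [densRatio_eq] using he.div_const _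
  · simpa only [densRatio_eq] using (hd k).div_const _
  refine (limsup_le_iff (isCoboundedUnder_le_of_le atTop fun k => div_nonneg (hd0 k) hω.le)
    ⟨(e + 1) / unitBallVol n, (hd_lt _ (lt_add_one e)).mono fun k hk =>
      div_le_div_of_nonneg_right hk.le hω.le⟩).2 fun b hb => ?_
  filter_upwards [hd_lt _ ((div_lt_iff₀ hω).1 hb)] with k hk using (div_lt_iff₀ hω).2 hk

/-- Upper semicontinuity of the `n`-dimensional density: if Radon measures
`μ_k → μ` weakly on an open set `U ⊆ ℝ^N`, `x_k → x`, and the normalized mass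
ratios of the `μ_k` at `x_k` satisfy a uniform almost-monotonicity inequality,
then all the `n`-dimensional densities `Θⁿ(μ_k, x_k)` and `Θⁿ(μ, x)` exist and
`Θⁿ(μ, x) ≥ limsup_k Θⁿ(μ_k, x_k)`. -/
theorem density_upper_semicontinuous {N n : ℕ} (hN : 1 ≤ N) (hn : 1 ≤ n)
    (U : Set (EuclideanSpace ℝ (Fin N))) (hU : IsOpen U)
    (μ : Measure (EuclideanSpace ℝ (Fin N)))
    (μk : ℕ → Measure (EuclideanSpace ℝ (Fin N)))
    (hμfin : ∀ K : Set (EuclideanSpace ℝ (Fin N)), K ⊆ U → IsCompact K → μ K ≠ ⊤)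
    (hμkfin : ∀ k, ∀ K : Set (EuclideanSpace ℝ (Fin N)), K ⊆ U → IsCompact K →
      μk k K ≠ ⊤)
    (hconv : ∀ f : EuclideanSpace ℝ (Fin N) → ℝ, Continuous f →
      HasCompactSupport f → tsupport f ⊆ U →
      Tendsto (fun k => ∫ y, f y ∂(μk k)) atTop (nhds (∫ y, f y ∂μ)))
    (x : EuclideanSpace ℝ (Fin N)) (hx : x ∈ U)
    (xk : ℕ → EuclideanSpace ℝ (Fin N)) (hxkU : ∀ k, xk k ∈ U)
    (hxk : Tendsto xk atTop (nhds x))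
    (C r₀ : ℝ) (hC : 0 ≤ C) (hr₀ : 0 < r₀)
    (hball : Metric.closedBall x (2 * r₀) ⊆ U)
    (hxkr : ∀ k, dist (xk k) x ≤ r₀)
    (hmono : ∀ k, ∀ σ ρ : ℝ, 0 < σ → σ < ρ → ρ ≤ r₀ →
      ((μk k) (Metric.ball (xk k) σ)).toReal / σ ^ n ≤
        (1 + C * ρ) * (((μk k) (Metric.ball (xk k) ρ)).toReal / ρ ^ n) + C * ρ) :
    ∃ d : ℝ, ∃ dk : ℕ → ℝ,
      Tendsto (fun ρ => densRatio n μ x ρ) (nhdsWithin 0 (Set.Ioi 0)) (nhds d) ∧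
      (∀ k, Tendsto (fun ρ => densRatio n (μk k) (xk k) ρ)
        (nhdsWithin 0 (Set.Ioi 0)) (nhds (dk k))) ∧
      limsup dk atTop ≤ d :=
  density_upper_semicontinuous_general U μ μk hμfin hμkfin hconv x xk hxk C r₀ hC hr₀ hball hmono

end
end
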